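/- Quantitative implicit function theorem: Let f : ℝ^d → ℝ be a C² function, U ⊆ ℝ^d open, x ∈ U, and let k > λ > 0 be constants. Assume f(x) = 0, x + [-1,1]^d ⊆ U, ‖∇f(x)‖ > λ, and sup_{y ∈ U} ‖∇f(y)‖ + sup_{y ∈ U} ‖Hess f(y)‖ ≤ k. Then, setting ε = λ² / (4 k² d^{3/2}), there exist an index i ∈ {1,…,d} and a C² function φ : ℝ^{d-1} → ℝ such that for all y ∈ x + [-ε,ε]^d, f(y) = 0 if and only if y_i = φ(y_1,…,ŷ_i,…,y_d) (where ŷ_i denotes omission of the i-th coordinate). -/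

import Mathlib

open scoped RealInnerProductSpace

/-!
Pick a coordinate `i` with `|∂ᵢ f x| ≥ ‖∇f x‖ / √d > λ / √d` and, replacing `f` by `-f`, assume
`∂ᵢ f x > 0`. On each coordinate line `t ↦ (z, t)` through a point `(z, xᵢ)` close to `x`, the
Hessian bound keeps `∂ᵢ f` above a tent `k (δ - |t - xᵢ|)` while the gradient bound keeps
`|f (z, xᵢ)|` below `k δ² / 2`, so comparing `f` with parabolas shows that it has exactly one zero
`φ z` on the line. The implicit function theorem makes `φ` a `C²` function on a box slightly larger
than the box of size `ε`, and a bump function extends it from the smaller box to all of `ℝ^{d-1}`.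
-/

open Set Metric Filter Topology

theorem add_mul_sq_div_two_le_of_le_deriv {g g' : ℝ → ℝ} {k δ : ℝ} (hδ : 0 ≤ δ)
    (hg : ∀ t ∈ Icc 0 δ, HasDerivAt g (g' t) t) (hg' : ∀ t ∈ Icc 0 δ, k * (δ - t) ≤ g' t) :
    g 0 + k * δ ^ 2 / 2 ≤ g δ := by
  have hmono : MonotoneOn (fun t => g t - k * (δ * t - t ^ 2 / 2)) (Icc 0 δ) := by
    refine monotoneOn_of_hasDerivWithinAt_nonneg (f' := fun t => g' t - k * (δ - t))
      (convex_Icc 0 δ) ?_ (fun t ht => ?_) (fun t ht => ?_)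
    · exact ContinuousOn.sub (fun t ht => (hg t ht).continuousAt.continuousWithinAt)
        (by fun_prop)
    · refine ((hg t (interior_subset ht)).sub ?_).hasDerivWithinAt
      simpa using
        (((hasDerivAt_id t).const_mul δ).sub ((hasDerivAt_pow 2 t).div_const 2)).const_mul k
    · linarith [hg' t (interior_subset ht)]
  have := hmono (left_mem_Icc.2 hδ) (right_mem_Icc.2 hδ) hδ
  simp only at this
  linarith

theorem exists_mem_Ioo_eq_zero_of_le_deriv {g g' : ℝ → ℝ} {k δ : ℝ} (hδ : 0 ≤ δ)
    (hg : ∀ t ∈ Icc (-δ) δ, HasDerivAt g (g' t) t)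
    (hg' : ∀ t ∈ Icc (-δ) δ, k * (δ - |t|) ≤ g' t) (h0 : |g 0| < k * δ ^ 2 / 2) :
    ∃ t ∈ Ioo (-δ) δ, g t = 0 := by
  have hpos : ∀ t ∈ Icc 0 δ, t ∈ Icc (-δ) δ := fun t ht => ⟨by linarith [ht.1], ht.2⟩
  have hneg : ∀ t ∈ Icc 0 δ, -t ∈ Icc (-δ) δ := fun t ht => ⟨by linarith [ht.2], by linarith [ht.1]⟩
  have hright : g 0 + k * δ ^ 2 / 2 ≤ g δ :=
    add_mul_sq_div_two_le_of_le_deriv hδ (fun t ht => hg t (hpos t ht))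
      (fun t ht => by simpa [abs_of_nonneg ht.1] using hg' t (hpos t ht))
  have hleft : -g 0 + k * δ ^ 2 / 2 ≤ -g (-δ) := by
    simpa using add_mul_sq_div_two_le_of_le_deriv (g := fun t => -g (-t)) hδ
      (fun t ht => by simpa using ((hg (-t) (hneg t ht)).comp t (hasDerivAt_neg t)).fun_neg)
      (fun t ht => by simpa [abs_of_nonneg ht.1] using hg' (-t) (hneg t ht))
  exact intermediate_value_Ioo (by linarith) (fun t ht => (hg t ht).continuousAt.continuousWithinAt)
    ⟨by linarith [abs_lt.1 h0], by linarith [abs_lt.1 h0]⟩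

section Line

variable {E : Type*} [NormedAddCommGroup E] [NormedSpace ℝ E] {f : E → ℝ} {S : Set E}
  {x p e : E} {k ρ δ : ℝ}

theorem fderiv_apply_sub_mul_norm_le (hf : ContDiff ℝ 2 f) (hS : Convex ℝ S) (hx : x ∈ S)
    (hD2f : ∀ y ∈ S, ‖fderiv ℝ (fderiv ℝ f) y‖ ≤ k) (he : ‖e‖ = 1) {y : E} (hy : y ∈ S) :
    fderiv ℝ f x e - k * ‖y - x‖ ≤ fderiv ℝ f y e := by
  have hDf : Differentiable ℝ (fderiv ℝ f) :=
    (hf.fderiv_right (m := 1) (by norm_num)).differentiable (by norm_num)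
  have hlip := hS.norm_image_sub_le_of_norm_fderiv_le (fun z _ => hDf z) hD2f hx hy
  have := ((fderiv ℝ f y - fderiv ℝ f x).le_opNorm e).trans
    (mul_le_mul_of_nonneg_right hlip (norm_nonneg e))
  rw [he, mul_one, sub_apply, Real.norm_eq_abs] at this
  linarith [neg_abs_le (fderiv ℝ f y e - fderiv ℝ f x e)]

theorem mul_sub_abs_le_fderiv_apply_add_smul (hf : ContDiff ℝ 2 f) (hS : Convex ℝ S)
    (hx : x ∈ S) (hD2f : ∀ y ∈ S, ‖fderiv ℝ (fderiv ℝ f) y‖ ≤ k) (he : ‖e‖ = 1) (hk : 0 ≤ k)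
    (hpx : ‖p - x‖ ≤ ρ) (hder : k * (ρ + δ) ≤ fderiv ℝ f x e) {t : ℝ} (ht : p + t • e ∈ S) :
    k * (δ - |t|) ≤ fderiv ℝ f (p + t • e) e := by
  have hdist : ‖p + t • e - x‖ ≤ ρ + |t| := by
    calc ‖p + t • e - x‖ = ‖(p - x) + t • e‖ := by rw [sub_add_eq_add_sub, add_sub_right_comm]
      _ ≤ ‖p - x‖ + ‖t • e‖ := norm_add_le _ _
      _ ≤ ρ + |t| := by rw [norm_smul, he, mul_one, Real.norm_eq_abs]; linarith
  have := fderiv_apply_sub_mul_norm_le hf hS hx hD2f he ht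
  nlinarith [mul_le_mul_of_nonneg_left hdist hk]

theorem exists_mem_Ioo_forall_apply_add_smul_eq_zero_iff (hf : ContDiff ℝ 2 f)
    (hS : Convex ℝ S) (hx : x ∈ S) (hDf : ∀ y ∈ S, ‖fderiv ℝ f y‖ ≤ k)
    (hD2f : ∀ y ∈ S, ‖fderiv ℝ (fderiv ℝ f) y‖ ≤ k) (hf0 : f x = 0) (he : ‖e‖ = 1) (hk : 0 < k)
    (hδ : 0 < δ) (hpx : ‖p - x‖ ≤ ρ) (hseg : ∀ t ∈ Icc (-δ) δ, p + t • e ∈ S)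
    (hder : k * (ρ + δ) ≤ fderiv ℝ f x e) (hgain : ρ < δ ^ 2 / 2) :
    ∃ t ∈ Ioo (-δ) δ, ∀ s ∈ Icc (-δ) δ, f (p + s • e) = 0 ↔ s = t := by
  have hlow := fun t (ht : t ∈ Icc (-δ) δ) =>
    mul_sub_abs_le_fderiv_apply_add_smul hf hS hx hD2f he hk.le hpx hder (hseg t ht)
  have hg : ∀ t, HasDerivAt (fun t => f (p + t • e)) (fderiv ℝ f (p + t • e) e) t := fun t =>
    ((hf.differentiable (by norm_num) _).hasFDerivAt.comp_hasDerivAt t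
      (((hasDerivAt_id t).smul_const e).const_add p)).congr_deriv (by simp)
  have h0 : |f (p + (0 : ℝ) • e)| < k * δ ^ 2 / 2 := by
    have := hS.norm_image_sub_le_of_norm_fderiv_le (fun z _ => hf.differentiable (by norm_num) z)
      hDf hx (by simpa using hseg 0 ⟨by linarith, hδ.le⟩)
    rw [hf0, sub_zero, Real.norm_eq_abs] at this
    rw [zero_smul, add_zero]
    nlinarith [mul_le_mul_of_nonneg_left hpx hk.le]
  obtain ⟨t, ht, hft⟩ := exists_mem_Ioo_eq_zero_of_le_deriv hδ.le (fun t _ => hg t) hlow h0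
  have hmono : StrictMonoOn (fun t => f (p + t • e)) (Icc (-δ) δ) := by
    refine strictMonoOn_of_hasDerivWithinAt_pos (convex_Icc _ _)
      (fun t _ => (hg t).continuousAt.continuousWithinAt) (fun t _ => (hg t).hasDerivWithinAt)
      (fun t ht => ?_)
    rw [interior_Icc] at ht
    nlinarith [hlow t (Ioo_subset_Icc_self ht), abs_lt.2 ht]
  refine ⟨t, ht, fun s hs => ⟨fun hfs => ?_, fun hst => hst ▸ hft⟩⟩
  exact hmono.injOn hs (Ioo_subset_Icc_self ht) (by simp only [hfs, hft])

end Line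

theorem EuclideanSpace.norm_le_sqrt_card_mul {ι : Type*} [Fintype ι] {v : EuclideanSpace ℝ ι}
    {r : ℝ} (hr : 0 ≤ r) (hv : ∀ j, |v j| ≤ r) : ‖v‖ ≤ √(Fintype.card ι) * r := by
  rw [EuclideanSpace.norm_eq, ← Real.sqrt_sq hr, ← Real.sqrt_mul (Nat.cast_nonneg _)]
  refine Real.sqrt_le_sqrt ?_
  calc ∑ j, ‖v j‖ ^ 2 ≤ ∑ _j : ι, r ^ 2 :=
        Finset.sum_le_sum fun j _ => by
          rw [Real.norm_eq_abs]; exact pow_le_pow_left₀ (abs_nonneg _) (hv j) 2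
    _ = Fintype.card ι * r ^ 2 := by simp

theorem EuclideanSpace.exists_norm_le_sqrt_card_mul_abs {ι : Type*} [Fintype ι] [Nonempty ι]
    (v : EuclideanSpace ℝ ι) : ∃ i, ‖v‖ ≤ √(Fintype.card ι) * |v i| := by
  obtain ⟨i, hi⟩ := Finite.exists_max fun j => |v j|
  exact ⟨i, norm_le_sqrt_card_mul (abs_nonneg _) hi⟩

theorem EuclideanSpace.gradient_apply {ι : Type*} [Fintype ι] [DecidableEq ι]
    (f : EuclideanSpace ℝ ι → ℝ) (x : EuclideanSpace ℝ ι) (i : ι) :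
    gradient f x i = fderiv ℝ f x (EuclideanSpace.single i 1) := by
  rw [gradient, ← InnerProductSpace.toDual_symm_apply, EuclideanSpace.inner_single_right]
  simp

section Coordinates

variable {d : ℕ}

noncomputable def insertCoord (i : Fin d) :
    (({j : Fin d // j ≠ i} → ℝ) × ℝ) →L[ℝ] EuclideanSpace ℝ (Fin d) :=
  LinearMap.toContinuousLinearMap
    { toFun := fun p => WithLp.toLp 2 fun j => if h : j = i then p.2 else p.1 ⟨j, h⟩
      map_add' := fun p q => by ext j; by_cases h : j = i <;> simp [h]
      map_smul' := fun c p => by ext j; by_cases h : j = i <;> simp [h] }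

variable (i : Fin d)

theorem insertCoord_apply (p : ({j : Fin d // j ≠ i} → ℝ) × ℝ) (j : Fin d) :
    insertCoord i p j = if h : j = i then p.2 else p.1 ⟨j, h⟩ := rfl

theorem insertCoord_restrict (y : EuclideanSpace ℝ (Fin d)) :
    insertCoord i (fun j => y j.1, y i) = y := by
  ext j
  by_cases h : j = i
  · subst h; simp [insertCoord_apply]
  · simp [insertCoord_apply, h]

theorem insertCoord_zero_one : insertCoord i (0, 1) = EuclideanSpace.single i 1 := by
  ext j
  by_cases h : j = i <;> simp [insertCoord_apply, h]

theorem insertCoord_add (z : {j : Fin d // j ≠ i} → ℝ) (s t : ℝ) :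
    insertCoord i (z, s + t) = insertCoord i (z, s) + t • EuclideanSpace.single i 1 := by
  rw [← insertCoord_zero_one, ← map_smul, ← map_add]
  simp

theorem norm_insertCoord_sub_le (x : EuclideanSpace ℝ (Fin d)) (z : {j : Fin d // j ≠ i} → ℝ) :
    ‖insertCoord i (z, x i) - x‖ ≤ √d * dist z (fun j => x j.1) := by
  simpa using EuclideanSpace.norm_le_sqrt_card_mul (v := insertCoord i (z, x i) - x)
    dist_nonneg fun j => by
      by_cases h : j = i
      · simp [insertCoord_apply, h]
      · simpa [insertCoord_apply, h, Real.dist_eq] using dist_le_pi_dist z (fun j => x j.1) ⟨j, h⟩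

/-- The box `|y j - x j| ≤ r` (`j ≠ i`), `|y i - x i| ≤ δ`: the ball is taken in the sup norm of
`{j // j ≠ i} → ℝ`. -/
def coordBox (x : EuclideanSpace ℝ (Fin d)) (r δ : ℝ) : Set (EuclideanSpace ℝ (Fin d)) :=
  insertCoord i '' (closedBall (fun j => x j.1) r ×ˢ Icc (x i - δ) (x i + δ))

theorem convex_coordBox (x : EuclideanSpace ℝ (Fin d)) (r δ : ℝ) :
    Convex ℝ (coordBox i x r δ) :=
  ((convex_closedBall _ _).prod (convex_Icc _ _)).linear_image (insertCoord i).toLinearMap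

theorem self_mem_coordBox (x : EuclideanSpace ℝ (Fin d)) {r δ : ℝ} (hr : 0 ≤ r) (hδ : 0 ≤ δ) :
    x ∈ coordBox i x r δ :=
  ⟨(fun j => x j.1, x i), ⟨mem_closedBall_self hr, by constructor <;> linarith⟩,
    insertCoord_restrict i x⟩

theorem abs_sub_le_of_mem_coordBox {x y : EuclideanSpace ℝ (Fin d)} {r δ : ℝ}
    (hy : y ∈ coordBox i x r δ) (j : Fin d) : |y j - x j| ≤ max r δ := by
  obtain ⟨⟨z, t⟩, ⟨hz, ht⟩, rfl⟩ := hy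
  by_cases h : j = i
  · subst h
    simpa [insertCoord_apply] using
      le_max_of_le_right (abs_sub_le_iff.2 ⟨by linarith [ht.2], by linarith [ht.1]⟩)
  · simpa [insertCoord_apply, h, Real.dist_eq] using
      le_max_of_le_left ((dist_le_pi_dist z (fun j => x j.1) ⟨j, h⟩).trans (mem_closedBall.1 hz))

end Coordinates

theorem ContinuousLinearMap.isInvertible_of_apply_one_ne_zero {𝕜 : Type*}
    [NontriviallyNormedField 𝕜] {L : 𝕜 →L[𝕜] 𝕜} (hL : L 1 ≠ 0) : L.IsInvertible :=
  ⟨ContinuousLinearEquiv.unitsEquivAut 𝕜 (Units.mk0 _ hL),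
    ContinuousLinearMap.ext_ring (by simp [ContinuousLinearEquiv.unitsEquivAut_apply])⟩

theorem ContDiffAt.contDiffAt_of_eventually_apply_eq_imp {𝕜 : Type*} [RCLike 𝕜]
    {E₁ E₂ F : Type*} [NormedAddCommGroup E₁] [NormedSpace 𝕜 E₁] [CompleteSpace E₁]
    [NormedAddCommGroup E₂] [NormedSpace 𝕜 E₂] [CompleteSpace E₂]
    [NormedAddCommGroup F] [NormedSpace 𝕜 F] [CompleteSpace F]
    {f : E₁ × E₂ → F} {u : E₁ × E₂} {n : WithTop ℕ∞} {φ : E₁ → E₂}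
    (hf : ContDiffAt 𝕜 n f u) (hn : n ≠ 0)
    (hinv : (fderiv 𝕜 f u ∘L .inr 𝕜 E₁ E₂).IsInvertible)
    (hφ : ∀ᶠ v in 𝓝 u, f v = f u → φ v.1 = v.2) : ContDiffAt 𝕜 n φ u.1 := by
  set ψ := hf.implicitFunction hn hinv
  have hψ : Tendsto (fun z => (z, ψ z)) (𝓝 u.1) (𝓝 u) := by
    have := continuousAt_id.prodMk (hf.hasStrictFDerivAt_implicitFunction hn hinv).continuousAt
    rwa [ContinuousAt, id, hf.implicitFunction_apply_self] at this
  have : ψ =ᶠ[𝓝 u.1] φ := by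
    filter_upwards [hf.eventually_apply_implicitFunction hn hinv, hψ.eventually hφ] with z h1 h2
    exact (h2 h1).symm
  exact (hf.contDiffAt_implicitFunction hn hinv).congr_of_eventuallyEq this.symm

theorem exists_implicitFunction_on_coordBox {d : ℕ} {f : EuclideanSpace ℝ (Fin d) → ℝ}
    (hf : ContDiff ℝ 2 f) {x : EuclideanSpace ℝ (Fin d)} {i : Fin d} {k r δ : ℝ}
    (hk : 0 < k) (hr : 0 ≤ r) (hδ : 0 < δ)
    (hDf : ∀ y ∈ coordBox i x r δ, ‖fderiv ℝ f y‖ ≤ k)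
    (hD2f : ∀ y ∈ coordBox i x r δ, ‖fderiv ℝ (fderiv ℝ f) y‖ ≤ k) (hf0 : f x = 0)
    (hder : k * (√d * r + δ) ≤ fderiv ℝ f x (EuclideanSpace.single i 1))
    (hgain : √d * r < δ ^ 2 / 2) :
    ∃ φ : ({j : Fin d // j ≠ i} → ℝ) → ℝ, (∀ z ∈ ball (fun j => x j.1) r, ContDiffAt ℝ 2 φ z) ∧
      ∀ z ∈ closedBall (fun j => x j.1) r, ∀ t ∈ Icc (x i - δ) (x i + δ),
        f (insertCoord i (z, t)) = 0 ↔ t = φ z := by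
  set e := EuclideanSpace.single i (1 : ℝ)
  have he : ‖e‖ = 1 := by simp [e]
  have hS := convex_coordBox i x r δ
  have hx := self_mem_coordBox i x hr hδ.le
  have hseg : ∀ z ∈ closedBall (fun j => x j.1) r, ∀ τ ∈ Icc (-δ) δ,
      insertCoord i (z, x i) + τ • e ∈ coordBox i x r δ := fun z hz τ hτ =>
    insertCoord_add i z _ τ ▸ mem_image_of_mem _ ⟨hz, by constructor <;> linarith [hτ.1, hτ.2]⟩
  have hpx : ∀ z ∈ closedBall (fun j => x j.1) r, ‖insertCoord i (z, x i) - x‖ ≤ √d * r :=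
    fun z hz => (norm_insertCoord_sub_le i x z).trans
      (mul_le_mul_of_nonneg_left (mem_closedBall.1 hz) (Real.sqrt_nonneg _))
  choose! τ hτ using fun z (hz : z ∈ closedBall (fun j => x j.1) r) =>
    exists_mem_Ioo_forall_apply_add_smul_eq_zero_iff hf hS hx hDf hD2f hf0 he hk hδ (hpx z hz)
      (hseg z hz) hder hgain
  have hgraph : ∀ z ∈ closedBall (fun j => x j.1) r, ∀ t ∈ Icc (x i - δ) (x i + δ),
      f (insertCoord i (z, t)) = 0 ↔ t = x i + τ z := fun z hz t ht => by
    rw [← add_sub_cancel (x i) t, insertCoord_add, (hτ z hz).2 _ ⟨by linarith [ht.1], by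
      linarith [ht.2]⟩, add_sub_cancel, sub_eq_iff_eq_add']
  refine ⟨fun z => x i + τ z, fun z hz => ?_, hgraph⟩
  have hz' := ball_subset_closedBall hz
  have hτz := (hτ z hz').1
  refine ContDiffAt.contDiffAt_of_eventually_apply_eq_imp (u := (z, x i + τ z))
    (hf.comp (insertCoord i).contDiff).contDiffAt (by norm_num)
    (ContinuousLinearMap.isInvertible_of_apply_one_ne_zero ?_) ?_
  · have hpos := mul_sub_abs_le_fderiv_apply_add_smul hf hS hx hD2f he hk.le (hpx z hz') hder
      (hseg z hz' _ (Ioo_subset_Icc_self hτz))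
    have hlt : 0 < fderiv ℝ f (insertCoord i (z, x i + τ z)) e := by
      rw [insertCoord_add]; nlinarith [abs_lt.2 hτz]
    rw [fderiv_comp _ (hf.differentiable (by norm_num) _) (insertCoord i).differentiableAt,
      ContinuousLinearMap.fderiv]
    simpa [insertCoord_zero_one] using hlt.ne'
  · have hmem : (z, x i + τ z) ∈ ball (fun j => x j.1) r ×ˢ Ioo (x i - δ) (x i + δ) :=
      ⟨hz, by constructor <;> linarith [hτz.1, hτz.2]⟩
    filter_upwards [(isOpen_ball.prod isOpen_Ioo).mem_nhds hmem] with v hv hfv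
    have hu : f (insertCoord i (z, x i + τ z)) = 0 :=
      (hgraph z hz' _ (Ioo_subset_Icc_self hmem.2)).2 rfl
    exact ((hgraph v.1 (ball_subset_closedBall hv.1) v.2 (Ioo_subset_Icc_self hv.2)).1
      (hfv.trans hu)).symm

theorem exists_contDiff_eqOn_closedBall {E F : Type*} [NormedAddCommGroup E] [NormedSpace ℝ E]
    [HasContDiffBump E] [NormedAddCommGroup F] [NormedSpace ℝ F] {n : ℕ∞} {φ : E → F} {c : E}
    {r R : ℝ} (hr : 0 < r) (hrR : r < R) (hφ : ∀ z ∈ ball c R, ContDiffAt ℝ n φ z) :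
    ∃ ψ : E → F, ContDiff ℝ n ψ ∧ EqOn ψ φ (closedBall c r) := by
  let ρ : ContDiffBump c := ⟨r, (r + R) / 2, hr, by linarith⟩
  refine ⟨fun z => ρ z • φ z, contDiff_iff_contDiffAt.2 fun z => ?_,
    fun z hz => by simp [ρ.one_of_mem_closedBall hz]⟩
  by_cases hz : z ∈ ball c R
  · exact ρ.contDiffAt.smul (hφ z hz)
  · have : z ∉ tsupport ρ := by
      rw [ρ.tsupport_eq]
      exact fun h => hz (closedBall_subset_ball (by simp [ρ]; linarith) h)
    refine (contDiffAt_const (c := (0 : F))).congr_of_eventuallyEq ?_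
    filter_upwards [notMem_tsupport_iff_eventuallyEq.1 this] with w hw
    simp [hw]

theorem exists_contDiff_graph_of_lt_fderiv {d : ℕ} {f : EuclideanSpace ℝ (Fin d) → ℝ}
    (hf : ContDiff ℝ 2 f) {x : EuclideanSpace ℝ (Fin d)} {k lam : ℝ} (hlam : 0 < lam)
    (hklam : lam < k) (hDf : ∀ y, (∀ j, |y j - x j| ≤ 1) → ‖fderiv ℝ f y‖ ≤ k)
    (hD2f : ∀ y, (∀ j, |y j - x j| ≤ 1) → ‖fderiv ℝ (fderiv ℝ f) y‖ ≤ k) (hf0 : f x = 0)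
    {i : Fin d} (hder : lam < √d * fderiv ℝ f x (EuclideanSpace.single i 1)) :
    ∃ φ : ({j : Fin d // j ≠ i} → ℝ) → ℝ, ContDiff ℝ 2 φ ∧
      ∀ y : EuclideanSpace ℝ (Fin d),
        (∀ j, |y j - x j| ≤ lam ^ 2 / (4 * k ^ 2 * (d : ℝ) ^ ((3 : ℝ) / 2))) →
        (f y = 0 ↔ y i = φ (fun j => y j.1)) := by
  have hk : 0 < k := hlam.trans hklam
  have hs : 1 ≤ √d := Real.one_le_sqrt.2 (by exact_mod_cast i.pos)
  set a := lam / (k * √d) with ha_def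
  have ha : 0 < a := by positivity
  have ha1 : a < 1 := (div_lt_one (by positivity)).2 (by nlinarith)
  have hka : k * a ≤ fderiv ℝ f x (EuclideanSpace.single i 1) := by
    rw [ha_def, mul_div_assoc', mul_div_mul_left _ _ hk.ne', div_le_iff₀ (by positivity)]
    linarith
  set ε := a ^ 2 / (4 * √d) with hε_def
  have hε : lam ^ 2 / (4 * k ^ 2 * (d : ℝ) ^ ((3 : ℝ) / 2)) = ε := by
    rw [show (d : ℝ) ^ ((3 : ℝ) / 2) = √d ^ 3 by
      rw [Real.sqrt_eq_rpow, ← Real.rpow_natCast, ← Real.rpow_mul (Nat.cast_nonneg d)]; norm_num,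
      hε_def, ha_def]
    field_simp
  have hε0 : 0 < ε := by positivity
  have hεa : ε ≤ a ^ 2 / 4 := div_le_div_of_nonneg_left (by positivity) (by norm_num) (by linarith)
  -- `δ = a - √d r` is the largest `δ` allowed by the slope condition. At `r = ε` the condition
  -- `√d r < δ ^ 2 / 2` holds with room to spare (`a²/4 < 9a²/32`), so it survives the slightly
  -- larger `r` that the cut-off needs.
  set r := 17 / 16 * ε with hr_def
  set δ := a - 17 * a ^ 2 / 64 with hδ_def
  have hsr : √d * r = 17 * a ^ 2 / 64 := by
    rw [hr_def, hε_def]; field_simp; ring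
  have hεδ : ε ≤ δ := by nlinarith
  have hbox : ∀ y ∈ coordBox i x r δ, ∀ j, |y j - x j| ≤ 1 := fun y hy j =>
    (abs_sub_le_of_mem_coordBox i hy j).trans (max_le (by nlinarith) (by nlinarith))
  have hgain : 17 * a ^ 2 / 64 < δ ^ 2 / 2 := by
    have : 17 / 64 < (1 - 17 * a / 64) ^ 2 / 2 := by nlinarith
    nlinarith [mul_lt_mul_of_pos_left this (pow_pos ha 2)]
  obtain ⟨φ, hφ, hgraph⟩ := exists_implicitFunction_on_coordBox hf hk (by positivity)
    (by nlinarith) (fun y hy => hDf y (hbox y hy)) (fun y hy => hD2f y (hbox y hy)) hf0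
    (by rw [hsr, hδ_def]; linarith) (by rwa [hsr])
  obtain ⟨ψ, hψ, hψφ⟩ := exists_contDiff_eqOn_closedBall hε0 (by linarith : ε < r) hφ
  refine ⟨ψ, hψ, fun y hy => ?_⟩
  have hyε : ∀ j, |y j - x j| ≤ ε := fun j => (hy j).trans_eq hε
  have hy' : (fun j : {j // j ≠ i} => y j.1) ∈ closedBall (fun j => x j.1) ε :=
    mem_closedBall.2 ((dist_pi_le_iff hε0.le).2 fun j => hyε j)
  have hyi := abs_le.1 (hyε i)
  rw [hψφ hy', ← hgraph _ (closedBall_subset_closedBall (by linarith) hy') (y i)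
    ⟨by linarith, by linarith⟩, insertCoord_restrict]

theorem exists_contDiff_graph_of_lt_abs_fderiv {d : ℕ} {f : EuclideanSpace ℝ (Fin d) → ℝ}
    (hf : ContDiff ℝ 2 f) {x : EuclideanSpace ℝ (Fin d)} {k lam : ℝ} (hlam : 0 < lam)
    (hklam : lam < k) (hDf : ∀ y, (∀ j, |y j - x j| ≤ 1) → ‖fderiv ℝ f y‖ ≤ k)
    (hD2f : ∀ y, (∀ j, |y j - x j| ≤ 1) → ‖fderiv ℝ (fderiv ℝ f) y‖ ≤ k) (hf0 : f x = 0)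
    {i : Fin d} (hder : lam < √d * |fderiv ℝ f x (EuclideanSpace.single i 1)|) :
    ∃ φ : ({j : Fin d // j ≠ i} → ℝ) → ℝ, ContDiff ℝ 2 φ ∧
      ∀ y : EuclideanSpace ℝ (Fin d),
        (∀ j, |y j - x j| ≤ lam ^ 2 / (4 * k ^ 2 * (d : ℝ) ^ ((3 : ℝ) / 2))) →
        (f y = 0 ↔ y i = φ (fun j => y j.1)) := by
  rcases le_total 0 (fderiv ℝ f x (EuclideanSpace.single i 1)) with hpos | hneg
  · rw [abs_of_nonneg hpos] at hder
    exact exists_contDiff_graph_of_lt_fderiv hf hlam hklam hDf hD2f hf0 hder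
  · rw [abs_of_nonpos hneg] at hder
    have hDneg : fderiv ℝ (fun y => -f y) = fun y => -fderiv ℝ f y :=
      funext fun y => fderiv_fun_neg
    obtain ⟨φ, hφ, hgraph⟩ := exists_contDiff_graph_of_lt_fderiv hf.neg hlam hklam
      (fun y hy => by simpa [hDneg] using hDf y hy)
      (fun y hy => by
        rw [hDneg, fderiv_fun_neg]; exact (norm_neg (fderiv ℝ (fderiv ℝ f) y)).trans_le (hD2f y hy))
      (by simp [hf0]) (i := i) (by simpa [hDneg] using hder)
    exact ⟨φ, hφ, fun y hy => by simpa using hgraph y hy⟩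

theorem stmt_2_general (d : ℕ) (f : EuclideanSpace ℝ (Fin d) → ℝ) (hf : ContDiff ℝ 2 f)
    (U : Set (EuclideanSpace ℝ (Fin d)))
    (x : EuclideanSpace ℝ (Fin d)) (hx : x ∈ U)
    (k lam : ℝ) (hlam : 0 < lam) (hklam : lam < k)
    (hf0 : f x = 0)
    (hcube : {y : EuclideanSpace ℝ (Fin d) | ∀ j, |y j - x j| ≤ 1} ⊆ U)
    (hgrad : lam < ‖gradient f x‖)
    (hC1 : ∀ y ∈ U, ∀ z ∈ U, ‖gradient f y‖ + ‖fderiv ℝ (fderiv ℝ f) z‖ ≤ k) :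
    ∃ i : Fin d, ∃ φ : ({j : Fin d // j ≠ i} → ℝ) → ℝ, ContDiff ℝ 2 φ ∧
      ∀ y : EuclideanSpace ℝ (Fin d),
        (∀ j, |y j - x j| ≤ lam ^ 2 / (4 * k ^ 2 * (d : ℝ) ^ ((3 : ℝ) / 2))) →
        (f y = 0 ↔ y i = φ (fun j => y j.1)) := by
  have hDf : ∀ y, (∀ j, |y j - x j| ≤ 1) → ‖fderiv ℝ f y‖ ≤ k := fun y hy => by
    have hnorm : ‖gradient f y‖ = ‖fderiv ℝ f y‖ := (InnerProductSpace.toDual ℝ _).symm.norm_map _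
    linarith [hC1 y (hcube hy) y (hcube hy), norm_nonneg (fderiv ℝ (fderiv ℝ f) y)]
  have hD2f : ∀ y, (∀ j, |y j - x j| ≤ 1) → ‖fderiv ℝ (fderiv ℝ f) y‖ ≤ k := fun y hy => by
    linarith [hC1 x hx y (hcube hy), norm_nonneg (gradient f x)]
  have : Nonempty (Fin d) := by
    by_contra h
    rw [not_nonempty_iff] at h
    simp [Subsingleton.elim (gradient f x) 0] at hgrad
    linarith
  obtain ⟨i, hi⟩ := EuclideanSpace.exists_norm_le_sqrt_card_mul_abs (gradient f x)
  rw [Fintype.card_fin, EuclideanSpace.gradient_apply] at hi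
  exact ⟨i, exists_contDiff_graph_of_lt_abs_fderiv hf hlam hklam hDf hD2f hf0 (hgrad.trans_le hi)⟩

/-- Quantitative implicit function theorem. -/
theorem stmt_2 (d : ℕ) (f : EuclideanSpace ℝ (Fin d) → ℝ) (hf : ContDiff ℝ 2 f)
    (U : Set (EuclideanSpace ℝ (Fin d))) (hU : IsOpen U)
    (x : EuclideanSpace ℝ (Fin d)) (hx : x ∈ U)
    (k lam : ℝ) (hlam : 0 < lam) (hklam : lam < k)
    (hf0 : f x = 0)
    (hcube : {y : EuclideanSpace ℝ (Fin d) | ∀ j, |y j - x j| ≤ 1} ⊆ U)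
    (hgrad : lam < ‖gradient f x‖)
    (hC1 : ∀ y ∈ U, ∀ z ∈ U, ‖gradient f y‖ + ‖fderiv ℝ (fderiv ℝ f) z‖ ≤ k) :
    ∃ i : Fin d, ∃ φ : ({j : Fin d // j ≠ i} → ℝ) → ℝ, ContDiff ℝ 2 φ ∧
      ∀ y : EuclideanSpace ℝ (Fin d),
        (∀ j, |y j - x j| ≤ lam ^ 2 / (4 * k ^ 2 * (d : ℝ) ^ ((3 : ℝ) / 2))) →
        (f y = 0 ↔ y i = φ (fun j => y j.1)) :=
  stmt_2_general d f hf U x hx k lam hlam hklam hf0 hcube hgrad hC1
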